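/- Let T be a map on finiteness spaces that is monotone for finiteness inclusion ⊑, monotone for finiteness extension ≼, and weakly continuous, i.e. T(⊔_j 𝒜_j) = ⊔_j T(𝒜_j) for every ⊑-directed family (𝒜_j) whose supremum is exact. Let ∅ denote the empty finiteness space (empty web). Then fix T := ⊔_{n∈ℕ} Tⁿ(∅) satisfies T(fix T) = fix T, and fix T ⊑ 𝒴 for every finiteness space 𝒴 with T(𝒴) = 𝒴; i.e. fix T is the ⊑-least fixpoint of T. -/

import Mathlib

/-!
The iterates `Tⁿ(∅)` form a `≼`-chain, since `∅ ≼ T(∅)` and `T` preserves `≼`. The supremum of a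
countable `≼`-chain is exact. A set `a` in the bidual of the union lies in the web of some member:
otherwise pick `xₙ ∈ a` outside the `n`-th web; `{xₙ}` is in the predual, hence finite as a subset
of `a`, hence inside a single web, which is absurd. And a set of the bidual inside the `n`-th web is
finitary there, because `≼` makes the later structures restrict to the `n`-th one. Weak continuity
thus gives `T(fix T) = ⊔ₙ Tⁿ⁺¹(∅) = fix T`, and exactness makes `fix T` the plain union of the
`Tⁿ(∅)`, each of which lies below any fixpoint by `⊑`-monotonicity.
-/

open Set

namespace FinitenessPaper

variable {α : Type*}

/-- The predual of a set `F` of subsets of `A`: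
all subsets of `A` whose intersection with every member of `F` is finite. -/
def predual (A : Set α) (F : Set (Set α)) : Set (Set α) :=
  {a' | a' ⊆ A ∧ ∀ a ∈ F, (a ∩ a').Finite}

/-- The predual operation is equal to its own triple iterate. -/
theorem tripredual (A : Set α) (F : Set (Set α)) :
    predual A (predual A (predual A F)) = predual A F := by
  ext h
  constructor
  · rintro ⟨hA, hfin⟩
    refine ⟨hA, fun a ha => ?_⟩
    have hmem : a ∩ A ∈ predual A (predual A F) := by
      refine ⟨inter_subset_right, fun g hg => ?_⟩
      exact (hg.2 a ha).subset fun x hx => ⟨hx.2.1, hx.1⟩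
    exact (hfin _ hmem).subset fun x hx => ⟨⟨hx.1, hA hx.2⟩, hx.2⟩
  · rintro ⟨hA, hfin⟩
    refine ⟨hA, fun g hg => ?_⟩
    exact (hg.2 h ⟨hA, hfin⟩).subset fun x hx => ⟨hx.2, hx.1⟩

/-- A finiteness space: a web together with a finiteness structure on it. -/
structure FinSpace (α : Type*) where
  web : Set α
  fin : Set (Set α)
  isFin : predual web (predual web fin) = fin

/-- Finiteness inclusion order. -/
def fsLE (A B : FinSpace α) : Prop := A.web ⊆ B.web ∧ A.fin ⊆ B.fin

/-- Finiteness extension order. -/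
def fsExt (A B : FinSpace α) : Prop :=
  A.web ⊆ B.web ∧ A.fin = {a ∈ B.fin | a ⊆ A.web}

/-- The `⊑`-supremum of a family of finiteness spaces. -/
def fsSup {ι : Type*} (A : ι → FinSpace α) : FinSpace α :=
  ⟨⋃ i, (A i).web,
   predual (⋃ i, (A i).web) (predual (⋃ i, (A i).web) (⋃ i, (A i).fin)),
   tripredual (⋃ i, (A i).web) (predual (⋃ i, (A i).web) (⋃ i, (A i).fin))⟩

/-- A family of finiteness spaces has an exact supremum when the union of the
finiteness structures is itself a finiteness structure. -/
def ExactFam {ι : Type*} (A : ι → FinSpace α) : Prop :=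
  predual (⋃ i, (A i).web) (predual (⋃ i, (A i).web) (⋃ i, (A i).fin))
    = ⋃ i, (A i).fin

theorem predual_empty (G : Set (Set α)) : predual (∅ : Set α) G = {∅} := by
  ext a
  simp only [predual, Set.mem_setOf_eq, Set.subset_empty_iff, Set.mem_singleton_iff]
  constructor
  · rintro ⟨h, -⟩; exact h
  · rintro rfl; exact ⟨rfl, fun b _ => by simp⟩

/-- The empty finiteness space. -/
def emptyFS (α : Type*) : FinSpace α :=
  ⟨∅, {∅}, by rw [predual_empty]⟩

theorem subset_predual_predual {A : Set α} {F : Set (Set α)} (hF : ∀ a ∈ F, a ⊆ A) :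
    F ⊆ predual A (predual A F) := fun a ha =>
  ⟨hF a ha, fun b hb => inter_comm a b ▸ hb.2 a ha⟩

namespace FinSpace

theorem subset_web_of_mem_fin (A : FinSpace α) {a : Set α} (ha : a ∈ A.fin) : a ⊆ A.web := by
  rw [← A.isFin] at ha
  exact ha.1

theorem empty_mem_fin (A : FinSpace α) : (∅ : Set α) ∈ A.fin := by
  rw [← A.isFin]
  exact ⟨empty_subset _, fun b _ => by simp⟩

theorem mem_fin_of_subset (A : FinSpace α) {a b : Set α} (ha : a ∈ A.fin) (hb : b ⊆ a) :
    b ∈ A.fin := by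
  rw [← A.isFin] at ha ⊢
  exact ⟨hb.trans ha.1, fun c hc => (ha.2 c hc).subset (inter_subset_inter_right _ hb)⟩

end FinSpace

theorem fsLE_of_fsExt {A B : FinSpace α} (h : fsExt A B) : fsLE A B :=
  ⟨h.1, h.2 ▸ fun _ ha => ha.1⟩

instance : Std.Refl (fsExt (α := α)) where
  refl A := ⟨subset_rfl, by ext a; exact ⟨fun h => ⟨h, A.subset_web_of_mem_fin h⟩, And.left⟩⟩

instance : IsTrans (FinSpace α) fsExt where
  trans _ _ _ hAB hBC := by
    refine ⟨hAB.1.trans hBC.1, ?_⟩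
    rw [hAB.2, hBC.2]
    ext a
    exact ⟨fun h => ⟨h.1.1, h.2⟩, fun h => ⟨⟨h.1, h.2.trans hAB.1⟩, h.2⟩⟩

theorem emptyFS_fsExt (B : FinSpace α) : fsExt (emptyFS α) B := by
  refine ⟨empty_subset _, ?_⟩
  ext a
  simp only [emptyFS, mem_singleton_iff, mem_ofPred_eq, subset_empty_iff]
  exact ⟨fun ha => ⟨ha ▸ B.empty_mem_fin, ha⟩, And.right⟩

theorem fsSup_fsLE_of_exactFam {ι : Type*} {A : ι → FinSpace α} {Y : FinSpace α}
    (hA : ExactFam A) (hY : ∀ i, fsLE (A i) Y) : fsLE (fsSup A) Y :=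
  ⟨iUnion_subset fun i => (hY i).1, hA.le.trans (iUnion_subset fun i => (hY i).2)⟩

theorem fsSup_congr {ι κ : Type*} {A : ι → FinSpace α} {B : κ → FinSpace α}
    (hweb : ⋃ i, (A i).web = ⋃ k, (B k).web) (hfin : ⋃ i, (A i).fin = ⋃ k, (B k).fin) :
    fsSup A = fsSup B := by
  unfold fsSup
  congr 1; simp only [hweb, hfin]

section Chain

variable {A : ℕ → FinSpace α}

theorem fsSup_succ_of_fsLE (hA : ∀ ⦃m n⦄, m ≤ n → fsLE (A m) (A n)) :
    fsSup (fun n => A (n + 1)) = fsSup A :=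
  fsSup_congr (Monotone.iUnion_nat_add (fun _ _ h => (hA h).1) 1)
    (Monotone.iUnion_nat_add (fun _ _ h => (hA h).2) 1)

theorem exists_subset_web_of_mem_predual_predual (hweb : Monotone fun n => (A n).web)
    {a : Set α} (ha : a ∈ predual (⋃ n, (A n).web) (predual (⋃ n, (A n).web) (⋃ n, (A n).fin))) :
    ∃ n, a ⊆ (A n).web := by
  by_contra! h
  choose x hxa hxw using fun n => not_subset.mp (h n)
  have hxa' : range x ⊆ a := range_subset_iff.mpr hxa
  -- `xₘ ∉ web n` for `m ≥ n`, so a finitary set of `A n` meets `range x` only below `n`.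
  have hx_perp : range x ∈ predual (⋃ n, (A n).web) (⋃ n, (A n).fin) := by
    refine ⟨hxa'.trans ha.1, fun c hc => ?_⟩
    obtain ⟨n, hcn⟩ := mem_iUnion.mp hc
    refine ((finite_Iio n).image x).subset ?_
    rintro _ ⟨hyc, m, rfl⟩
    exact ⟨m, not_le.mp fun hnm => hxw m (hweb hnm ((A n).subset_web_of_mem_fin hcn hyc)), rfl⟩
  have hx_fin : (range x).Finite := inter_eq_left.mpr hxa' ▸ ha.2 _ hx_perp
  obtain ⟨N, hN⟩ := hweb.directed_le.exists_mem_subset_of_finset_subset_biUnion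
    (s := hx_fin.toFinset) (by simpa using hxa'.trans ha.1)
  exact hxw N (hN (by simp))

theorem mem_fin_of_mem_predual_predual (hA : ∀ ⦃m n⦄, m ≤ n → fsExt (A m) (A n)) {n : ℕ}
    {a : Set α} (ha : a ∈ predual (⋃ n, (A n).web) (predual (⋃ n, (A n).web) (⋃ n, (A n).fin)))
    (han : a ⊆ (A n).web) : a ∈ (A n).fin := by
  rw [← (A n).isFin]
  refine ⟨han, fun b hb => ha.2 b ⟨hb.1.trans (subset_iUnion (fun n => (A n).web) n), ?_⟩⟩
  intro c hc
  obtain ⟨m, hcm⟩ := mem_iUnion.mp hc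
  rcases le_total m n with hmn | hnm
  · exact hb.2 c ((fsLE_of_fsExt (hA hmn)).2 hcm)
  · have hc_trace : c ∩ (A n).web ∈ (A n).fin := by
      rw [(hA hnm).2]
      exact ⟨(A m).mem_fin_of_subset hcm inter_subset_left, inter_subset_right⟩
    exact (hb.2 _ hc_trace).subset fun x hx => ⟨⟨hx.1, hb.1 hx.2⟩, hx.2⟩

theorem exactFam_of_fsExt (hA : ∀ ⦃m n⦄, m ≤ n → fsExt (A m) (A n)) : ExactFam A := by
  refine subset_antisymm (fun a ha => ?_) (subset_predual_predual fun a ha => ?_)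
  · obtain ⟨n, han⟩ := exists_subset_web_of_mem_predual_predual (fun _ _ h => (hA h).1) ha
    exact mem_iUnion.mpr ⟨n, mem_fin_of_mem_predual_predual hA ha han⟩
  · obtain ⟨n, han⟩ := mem_iUnion.mp ha
    exact ((A n).subset_web_of_mem_fin han).trans (subset_iUnion (fun n => (A n).web) n)

end Chain

section Iterate

variable {T : FinSpace α → FinSpace α}

theorem fsExt_iterate_emptyFS (hT : ∀ A B, fsExt A B → fsExt (T A) (T B)) :
    ∀ ⦃m n⦄, m ≤ n → fsExt (T^[m] (emptyFS α)) (T^[n] (emptyFS α)) := by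
  refine Nat.rel_of_forall_rel_succ_of_le fsExt fun n => ?_
  induction n with
  | zero => exact emptyFS_fsExt _
  | succ n ih =>
    simpa only [Function.iterate_succ_apply'] using hT _ _ ih

theorem iterate_emptyFS_fsLE_of_isFixedPt (hT : ∀ A B, fsLE A B → fsLE (T A) (T B)) {Y : FinSpace α}
    (hY : T Y = Y) (n : ℕ) : fsLE (T^[n] (emptyFS α)) Y := by
  induction n with
  | zero => exact fsLE_of_fsExt (emptyFS_fsExt Y)
  | succ n ih =>
    rw [Function.iterate_succ_apply', ← hY]
    exact hT _ _ ih

end Iterate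

/-- If `T` is monotone for finiteness inclusion and for finiteness extension and
weakly continuous (commutes with directed suprema when they are exact), then
`fix T = ⊔ₙ Tⁿ(∅)` is the `⊑`-least fixpoint of `T`. -/
theorem weaklyContinuous_least_fixpoint (T : FinSpace α → FinSpace α)
    (hmono_inc : ∀ A B : FinSpace α, fsLE A B → fsLE (T A) (T B))
    (hmono_ext : ∀ A B : FinSpace α, fsExt A B → fsExt (T A) (T B))
    (hcont : ∀ {ι : Type} (A : ι → FinSpace α), Directed fsLE A → ExactFam A →
      T (fsSup A) = fsSup fun i => T (A i)) :
    T (fsSup fun n : ℕ => T^[n] (emptyFS α)) = fsSup (fun n : ℕ => T^[n] (emptyFS α)) ∧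
    ∀ Y : FinSpace α, T Y = Y → fsLE (fsSup fun n : ℕ => T^[n] (emptyFS α)) Y := by
  have hchain := fsExt_iterate_emptyFS hmono_ext
  have hexact := exactFam_of_fsExt hchain
  have hle : ∀ ⦃m n⦄, m ≤ n → fsLE (T^[m] (emptyFS α)) (T^[n] (emptyFS α)) :=
    fun _ _ h => fsLE_of_fsExt (hchain h)
  refine ⟨?_, fun Y hY =>
    fsSup_fsLE_of_exactFam hexact (iterate_emptyFS_fsLE_of_isFixedPt hmono_inc hY)⟩
  rw [hcont _ (directed_of_isDirected_le hle) hexact, ← fsSup_succ_of_fsLE hle]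
  simp only [Function.iterate_succ_apply']

end FinitenessPaper
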